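/- arXiv:2309.13848 — 2 statements merged into one kernel-verified Lean document; each statement's English description precedes it below -/
import Mathlib

section
/- Let I ⊆ ℝ be an open interval, A : I → Matrix (Fin n) (Fin n) ℂ, and suppose v : I → ℂⁿ is a cyclic vector for Aᵀ, i.e. the matrix Φ(t) with rows Dⁱ[v](t), i = 0,…,n−1 (where D[w] = w' + Aᵀ w) is invertible for all t ∈ I. Then the matrix B(t) = Φ'(t)Φ(t)⁻¹ + Φ(t)A(t)Φ(t)⁻¹ is in companion (scalar) form: B(t)ᵢⱼ = 1 if j = i+1 and i < n−1, B(t)ᵢⱼ = 0 for all other entries with i < n−1. -/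
/-- The operator `D[w](t) = w'(t) + A(t)ᵀ ⬝ w(t)`. -/
noncomputable def Dop {n : ℕ} (A : ℝ → Matrix (Fin n) (Fin n) ℂ)
    (w : ℝ → Fin n → ℂ) : ℝ → Fin n → ℂ :=
  fun t => deriv w t + Matrix.mulVec (A t).transpose (w t)

/-- If `v` is a cyclic vector for `Aᵀ`, i.e. the matrix `Φ(t)` with rows `Dⁱ[v](t)` is
invertible on `I`, then `B = Φ'Φ⁻¹ + ΦAΦ⁻¹` is in companion (scalar) form: its first
`n-1` rows have ones on the superdiagonal and zeros elsewhere. -/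
theorem stmt_2 {n : ℕ} (a b : ℝ)
    (A : ℝ → Matrix (Fin n) (Fin n) ℂ) (v : ℝ → Fin n → ℂ)
    (hdiff : ∀ k < n, ∀ t ∈ Set.Ioo a b, DifferentiableAt ℝ ((Dop A)^[k] v) t)
    (Φ Φ' B : ℝ → Matrix (Fin n) (Fin n) ℂ)
    (hΦ : ∀ t, Φ t = Matrix.of fun (i : Fin n) (j : Fin n) => (Dop A)^[(i : ℕ)] v t j)
    (hΦ' : ∀ t ∈ Set.Ioo a b, ∀ i : Fin n,
      HasDerivAt ((Dop A)^[(i : ℕ)] v) (fun j => Φ' t i j) t)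
    (hinv : ∀ t ∈ Set.Ioo a b, IsUnit (Φ t))
    (hB : ∀ t, B t = Φ' t * (Φ t)⁻¹ + Φ t * A t * (Φ t)⁻¹) :
    ∀ t ∈ Set.Ioo a b, ∀ i j : Fin n, (i : ℕ) < n - 1 →
      B t i j = if (j : ℕ) = (i : ℕ) + 1 then 1 else 0 := by
  intro t ht i j hi
  have hn : (i : ℕ) + 1 < n := by omega
  set i' : Fin n := ⟨(i : ℕ) + 1, hn⟩ with hi'
  -- derivative of the i-th iterate
  have hderiv : deriv ((Dop A)^[(i : ℕ)] v) t = fun j => Φ' t i j :=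
    (hΦ' t ht i).deriv
  -- key row identity: (Φ' t + Φ t * A t) i = Φ t i'
  have key : ∀ k : Fin n, Φ' t i k + (Φ t * A t) i k = Φ t i' k := by
    intro k
    have h1 : Φ t i' k = Dop A ((Dop A)^[(i : ℕ)] v) t k := by
      rw [hΦ]
      simp only [Matrix.of_apply]
      rw [Function.iterate_succ_apply']
    rw [h1]
    simp only [Dop, Pi.add_apply, hderiv]
    congr 1
    rw [Matrix.mul_apply, Matrix.mulVec, dotProduct]
    simp only [Matrix.transpose_apply, hΦ, Matrix.of_apply]
    exact Finset.sum_congr rfl fun x _ => mul_comm _ _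
  have hdet : IsUnit (Φ t).det := (Matrix.isUnit_iff_isUnit_det _).mp (hinv t ht)
  have hone : Φ t * (Φ t)⁻¹ = 1 := Matrix.mul_nonsing_inv _ hdet
  have : B t i j = (Φ t * (Φ t)⁻¹) i' j := by
    rw [hB]
    rw [Matrix.add_apply, Matrix.mul_apply, Matrix.mul_apply, Matrix.mul_apply,
      ← Finset.sum_add_distrib]
    refine Finset.sum_congr rfl fun k _ => ?_
    rw [← add_mul, key k]
  rw [this, hone, Matrix.one_apply]
  by_cases h : (j : ℕ) = (i : ℕ) + 1
  · have : i' = j := by ext; simp [hi', h]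
    simp [this, h]
  · have hne : i' ≠ j := fun he => h (by rw [← he])
    simp [hne, h]
end

section
/- Let A : I → Matrix (Fin n) (Fin n) ℂ be continuous on an open interval I and let Y : I → Matrix (Fin n) (Fin n) ℂ be differentiable with Y'(t) = A(t) Y(t) on I. If Y(t₀) is invertible for some t₀ ∈ I, then Y(t) is invertible for all t ∈ I. -/
/-!
Jacobi's formula, i.e. the derivative of the determinant as a multilinear function of the rows,
turns `Y' = A Y` into the scalar equation `(det Y)' = tr A · det Y`. With `C` a primitive of
`tr A`, the function `exp (-C) · det Y` has derivative zero, hence is constant on the interval,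
so `det Y` vanishes nowhere as soon as it is nonzero at one point.
-/

open Set

namespace Matrix

variable {𝕜 R ι : Type*} [NontriviallyNormedField 𝕜] [NormedCommRing R] [NormedAlgebra 𝕜 R]
  [Fintype ι] [DecidableEq ι]

variable (𝕜 R ι) in
def detRowContinuousMultilinear : ContinuousMultilinearMap 𝕜 (fun _ : ι => ι → R) R where
  toMultilinearMap := (detRowAlternating : (ι → R) [⋀^ι]→ₗ[R] R).toMultilinearMap.restrictScalars 𝕜
  cont := continuous_id.matrix_det

theorem hasDerivAt_det {Y : 𝕜 → Matrix ι ι R} {Y' : Matrix ι ι R} {t : 𝕜}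
    (h : ∀ i j, HasDerivAt (fun s => Y s i j) (Y' i j) t) :
    HasDerivAt (fun s => (Y s).det) (∑ i, ((Y t).updateRow i (Y' i)).det) t := by
  have hY : HasDerivAt (fun s => (Y s : ι → ι → R)) Y' t :=
    hasDerivAt_pi.2 fun i => hasDerivAt_pi.2 (h i)
  exact (((detRowContinuousMultilinear 𝕜 R ι).hasFDerivAt (Y t)).comp_hasDerivAt t hY).congr_deriv
    (ContinuousMultilinearMap.linearDeriv_apply _ _ _)

theorem hasDerivAt_det_of_hasDerivAt_eq_mul {A : Matrix ι ι R} {Y : 𝕜 → Matrix ι ι R} {t : 𝕜}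
    (h : ∀ i j, HasDerivAt (fun s => Y s i j) ((A * Y t) i j) t) :
    HasDerivAt (fun s => (Y s).det) (A.trace * (Y t).det) t := by
  have hrow : ∀ i, (A * Y t) i = ∑ k, A i k • Y t k := fun i => by
    ext j; simp [mul_apply]
  simpa [hrow, det_updateRow_sum, trace, Finset.sum_mul] using hasDerivAt_det h

end Matrix

theorem IsOpen.exists_hasDerivAt_of_continuousOn {E : Type*} [NormedAddCommGroup E]
    [NormedSpace ℝ E] [CompleteSpace E] {f : ℝ → E} {s : Set ℝ} (hs : IsOpen s)
    (hs' : IsPreconnected s) (hf : ContinuousOn f s) :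
    ∃ F : ℝ → E, ∀ x ∈ s, HasDerivAt F (f x) x := by
  rcases s.eq_empty_or_nonempty with rfl | ⟨x₀, hx₀⟩
  · exact ⟨0, by simp⟩
  refine ⟨fun x => ∫ u in x₀..x, f u, fun x hx => ?_⟩
  exact intervalIntegral.integral_hasDerivAt_right
    (hf.mono (hs'.ordConnected.uIcc_subset hx₀ hx)).intervalIntegrable
    (hf.stronglyMeasurableAtFilter hs x hx) ((hf x hx).continuousAt (hs.mem_nhds hx))

theorem IsOpen.ne_zero_of_hasDerivAt_eq_mul_self {f c : ℝ → ℂ} {s : Set ℝ} (hs : IsOpen s)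
    (hs' : IsPreconnected s) (hc : ContinuousOn c s)
    (hf : ∀ t ∈ s, HasDerivAt f (c t * f t) t) {t₀ t : ℝ} (ht₀ : t₀ ∈ s) (ht : t ∈ s)
    (hf₀ : f t₀ ≠ 0) : f t ≠ 0 := by
  obtain ⟨C, hC⟩ := hs.exists_hasDerivAt_of_continuousOn hs' hc
  have hderiv : ∀ x ∈ s, HasDerivAt (fun x => Complex.exp (-C x) * f x) 0 x := fun x hx =>
    ((hC x hx).neg.cexp.mul (hf x hx)).congr_deriv (by ring)
  have hconst := hs.is_const_of_deriv_eq_zero hs'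
    (fun x hx => (hderiv x hx).differentiableAt.differentiableWithinAt)
    (fun x hx => (hderiv x hx).deriv) ht ht₀
  intro hft
  simp [hft, Complex.exp_ne_zero, hf₀] at hconst

/-- A matrix solution of `Y' = AY` that is invertible at one point of an open interval is
invertible everywhere on that interval. -/
theorem stmt_11 {n : ℕ} (a b : ℝ)
    (A Y : ℝ → Matrix (Fin n) (Fin n) ℂ)
    (hA : ∀ i j, ContinuousOn (fun t => A t i j) (Set.Ioo a b))
    (hY : ∀ t ∈ Set.Ioo a b, ∀ i j,
      HasDerivAt (fun s => Y s i j) ((A t * Y t) i j) t)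
    (t₀ : ℝ) (ht₀ : t₀ ∈ Set.Ioo a b) (hY₀ : IsUnit (Y t₀)) :
    ∀ t ∈ Set.Ioo a b, IsUnit (Y t) := by
  intro t ht
  have htrace : ContinuousOn (fun s => (A s).trace) (Ioo a b) :=
    continuousOn_finsetSum _ fun i _ => hA i i
  rw [Matrix.isUnit_iff_isUnit_det, isUnit_iff_ne_zero] at hY₀ ⊢
  exact isOpen_Ioo.ne_zero_of_hasDerivAt_eq_mul_self isPreconnected_Ioo htrace
    (fun s hs => Matrix.hasDerivAt_det_of_hasDerivAt_eq_mul (hY s hs)) ht₀ ht hY₀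
end
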